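/- Let r ≥ 0. The map φ sending an r-element subset A = {a_1 < ... < a_r} of [2r+2] to A ∪ {a_j + 1}, where j is the largest index i ∈ {0,1,...,r} for which a_i - 2i is minimal (with a_0 = 0), is a well-defined injection from the r-element subsets of [2r+2] into the (r+1)-element subsets of [2r+2]. Moreover, the element 2r+2 never lies in φ(A) \ A. -/

import Mathlib

/-- For a finite set `A = {a_1 < a_2 < ...} ⊆ ℕ`, `elemOf A i` is the `i`-th smallest
element `a_i` of `A` (for `1 ≤ i ≤ |A|`), with the convention `a_0 = 0`. -/
def elemOf (A : Finset ℕ) (i : ℕ) : ℕ :=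
  if i = 0 then 0 else (A.sort (· ≤ ·)).getD (i - 1) 0

/-- The quantity `a_i - 2i` (as an integer). -/
def vOf (A : Finset ℕ) (i : ℕ) : ℤ :=
  (elemOf A i : ℤ) - 2 * i

lemma elemOf_zero (A : Finset ℕ) : elemOf A 0 = 0 := rfl

lemma elemOf_eq_getElem (A : Finset ℕ) {i : ℕ} (h1 : i ≠ 0)
    (h2 : i - 1 < (A.sort (· ≤ ·)).length) :
    elemOf A i = (A.sort (· ≤ ·))[i - 1] := by
  rw [elemOf, if_neg h1, List.getD_eq_getElem _ _ h2]

lemma elemOf_mem (A : Finset ℕ) {i : ℕ} (h1 : i ≠ 0) (h2 : i ≤ A.card) :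
    elemOf A i ∈ A := by
  have hl : i - 1 < (A.sort (· ≤ ·)).length := by
    rw [Finset.length_sort]; omega
  rw [elemOf_eq_getElem A h1 hl]
  have := List.getElem_mem hl
  rwa [Finset.mem_sort] at this

lemma sort_le_getElem (A : Finset ℕ) {i i' : ℕ} (h : i ≤ i')
    (h' : i' < (A.sort (· ≤ ·)).length) :
    (A.sort (· ≤ ·))[i]'(by omega) ≤ (A.sort (· ≤ ·))[i'] := by
  rcases eq_or_lt_of_le h with rfl | h
  · exact le_rfl
  · exact le_of_lt <| List.pairwise_iff_get.1 (A.sortedLT_sort.pairwise) ⟨i, by omega⟩ ⟨i', h'⟩ (by simpa)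

lemma elemOf_lt (A : Finset ℕ) (h1 : ∀ a ∈ A, 1 ≤ a) {i i' : ℕ} (h : i < i')
    (h2 : i' ≤ A.card) : elemOf A i < elemOf A i' := by
  have hl' : i' - 1 < (A.sort (· ≤ ·)).length := by rw [Finset.length_sort]; omega
  rcases Nat.eq_zero_or_pos i with rfl | hi
  · rw [elemOf_zero]
    exact lt_of_lt_of_le Nat.zero_lt_one (h1 _ (elemOf_mem A (by omega) h2))
  · have hl : i - 1 < (A.sort (· ≤ ·)).length := by rw [Finset.length_sort]; omega
    rw [elemOf_eq_getElem A (by omega) hl, elemOf_eq_getElem A (by omega) hl']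
    exact List.pairwise_iff_get.1 (A.sortedLT_sort.pairwise) ⟨i-1, hl⟩ ⟨i'-1, hl'⟩ (by simp; omega)

lemma elemOf_le (A : Finset ℕ) (h1 : ∀ a ∈ A, 1 ≤ a) {i i' : ℕ} (h : i ≤ i')
    (h2 : i' ≤ A.card) : elemOf A i ≤ elemOf A i' := by
  rcases eq_or_lt_of_le h with rfl | h
  · exact le_rfl
  · exact (elemOf_lt A h1 h h2).le

lemma sort_insert_eq (A : Finset ℕ) (x j : ℕ) (hx : x ∉ A)
    (hj : j ≤ (A.sort (· ≤ ·)).length)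
    (hlow : ∀ i (h : i < (A.sort (· ≤ ·)).length), i < j → (A.sort (· ≤ ·))[i] < x)
    (hhigh : ∀ i (h : i < (A.sort (· ≤ ·)).length), j ≤ i → x < (A.sort (· ≤ ·))[i]) :
    (insert x A).sort (· ≤ ·) =
      (A.sort (· ≤ ·)).take j ++ x :: (A.sort (· ≤ ·)).drop j := by
  set l := A.sort (· ≤ ·) with hl
  have hperm : List.Perm ((insert x A).sort (· ≤ ·)) (l.take j ++ x :: l.drop j) := by
    refine ((Finset.sort_perm_toList _ _).trans ?_).trans List.perm_middle.symm
    rw [List.take_append_drop]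
    exact (Finset.toList_insert hx).trans ((A.sort_perm_toList (· ≤ ·)).symm.cons x)
  refine List.Perm.eq_of_pairwise' (Finset.pairwise_sort _ _) ?_ hperm
  have hsort : l.Pairwise (· ≤ ·) := Finset.pairwise_sort _ _
  rw [List.pairwise_append]
  refine ⟨hsort.sublist (List.take_sublist _ _), ?_, ?_⟩
  · rw [List.pairwise_cons]
    refine ⟨?_, hsort.sublist (List.drop_sublist _ _)⟩
    intro b hb
    obtain ⟨i, hi, rfl⟩ := List.getElem_of_mem hb
    rw [List.getElem_drop]
    have := hhigh (j + i) (by simp at hi; omega) (by omega)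
    exact this.le
  · intro a ha b hb
    obtain ⟨i, hi, rfl⟩ := List.getElem_of_mem ha
    simp only [List.getElem_take]
    have hlen : i < j := by simp at hi; omega
    have hax : l[i]'(by simp at hi; omega) < x := hlow i (by simp at hi; omega) hlen
    rcases List.mem_cons.1 hb with rfl | hb
    · exact hax.le
    · obtain ⟨k, hk, rfl⟩ := List.getElem_of_mem hb
      rw [List.getElem_drop]
      have := hhigh (j + k) (by simp at hk; omega) (by omega)
      omega

lemma core (r : ℕ) (A : Finset ℕ)
    (hA : A ⊆ Finset.Icc 1 (2 * r + 2)) (hcard : A.card = r)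
    (j : ℕ) (hj : j ≤ r)
    (hmin : ∀ i ≤ r, vOf A j ≤ vOf A i)
    (hlargest : ∀ i ≤ r, vOf A i = vOf A j → i ≤ j) :
    elemOf A j + 1 ∉ A ∧ elemOf A j ≤ 2 * r ∧
    elemOf (insert (elemOf A j + 1) A) (j + 1) = elemOf A j + 1 ∧
    (∀ i ≤ r + 1, vOf (insert (elemOf A j + 1) A) (j + 1) ≤ vOf (insert (elemOf A j + 1) A) i) ∧
    (∀ i ≤ r + 1, vOf (insert (elemOf A j + 1) A) i = vOf (insert (elemOf A j + 1) A) (j + 1) →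
      j + 1 ≤ i) := by
  have h1 : ∀ a ∈ A, 1 ≤ a := fun b hb => (Finset.mem_Icc.1 (hA hb)).1
  have hlen : (A.sort (· ≤ ·)).length = r := by rw [Finset.length_sort, hcard]
  -- a j ≤ 2 j
  have haj : elemOf A j ≤ 2 * j := by
    have h0 := hmin 0 (Nat.zero_le r)
    simp only [vOf, elemOf_zero] at h0
    push_cast at h0
    omega
  -- x ∉ A
  have hxA : elemOf A j + 1 ∉ A := by
    intro hmem
    obtain ⟨p, hp, hpx⟩ := List.getElem_of_mem ((Finset.mem_sort (α := ℕ) (· ≤ ·)).2 hmem)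
    have hjp : j ≤ p := by
      by_contra hc
      push_neg at hc
      have hj0 : j ≠ 0 := by omega
      have h2 : elemOf A j = (A.sort (· ≤ ·))[j-1]'(by omega) :=
        elemOf_eq_getElem A hj0 (by omega)
      have := sort_le_getElem A (i := p) (i' := j - 1) (by omega) (by omega)
      omega
    have hjr : j < r := by omega
    have h3 : elemOf A (j+1) = (A.sort (· ≤ ·))[j]'(by omega) :=
      elemOf_eq_getElem A (by omega) (by omega)
    have h4 := sort_le_getElem A (i := j) (i' := p) hjp hp
    have h5 : elemOf A j < elemOf A (j+1) := elemOf_lt A h1 (by omega) (by omega)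
    have h6 : elemOf A (j+1) = elemOf A j + 1 := by omega
    have h7 := hmin (j+1) (by omega)
    simp only [vOf, h6] at h7
    push_cast at h7
    omega
  have hgap : j < r → elemOf A j + 1 < elemOf A (j + 1) := by
    intro hjr
    have h5 : elemOf A j < elemOf A (j+1) := elemOf_lt A h1 (by omega) (by omega)
    have h6 : elemOf A (j+1) ≠ elemOf A j + 1 := by
      intro h
      exact hxA (h ▸ elemOf_mem A (by omega) (by omega))
    omega
  have hlow : ∀ i (h : i < (A.sort (· ≤ ·)).length), i < j →
      (A.sort (· ≤ ·))[i] < elemOf A j + 1 := by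
    intro i hi hij
    have he : elemOf A (i+1) = (A.sort (· ≤ ·))[i]'hi := elemOf_eq_getElem A (by omega) (by omega)
    have h2 : elemOf A (i+1) ≤ elemOf A j := elemOf_le A h1 (by omega) (by omega)
    omega
  have hhigh : ∀ i (h : i < (A.sort (· ≤ ·)).length), j ≤ i →
      elemOf A j + 1 < (A.sort (· ≤ ·))[i] := by
    intro i hi hij
    have he : elemOf A (i+1) = (A.sort (· ≤ ·))[i]'hi := elemOf_eq_getElem A (by omega) (by omega)
    have h2 : elemOf A (j+1) ≤ elemOf A (i+1) := elemOf_le A h1 (by omega) (by omega)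
    have h3 := hgap (by omega)
    omega
  have hsorteq := sort_insert_eq A (elemOf A j + 1) j hxA (by omega) hlow hhigh
  have htlen : ((A.sort (· ≤ ·)).take j).length = j := by
    rw [List.length_take]; omega
  -- elemOf values of B = insert x A
  have hB1 : elemOf (insert (elemOf A j + 1) A) (j+1) = elemOf A j + 1 := by
    rw [elemOf, if_neg (Nat.succ_ne_zero j), List.getD_eq_getElem?_getD, hsorteq]
    simp only [Nat.add_sub_cancel]
    rw [List.getElem?_append_right (by rw [htlen]), htlen, Nat.sub_self]
    simp
  have hB2 : ∀ i, i ≠ 0 → i ≤ j → elemOf (insert (elemOf A j + 1) A) i = elemOf A i := by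
    intro i h0 hij
    rw [elemOf, if_neg h0, List.getD_eq_getElem?_getD, hsorteq,
        List.getElem?_append_left (by rw [htlen]; omega),
        List.getElem?_take_of_lt (by omega),
        ← List.getD_eq_getElem?_getD, elemOf, if_neg h0]
  have hB3 : ∀ i, j + 2 ≤ i → elemOf (insert (elemOf A j + 1) A) i = elemOf A (i - 1) := by
    intro i h2
    rw [elemOf, if_neg (by omega), List.getD_eq_getElem?_getD, hsorteq,
        List.getElem?_append_right (by rw [htlen]; omega), htlen]
    have e1 : i - 1 - j = (i - j - 2) + 1 := by omega
    rw [e1, List.getElem?_cons_succ, List.getElem?_drop]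
    have e2 : j + (i - j - 2) = i - 1 - 1 := by omega
    rw [e2, ← List.getD_eq_getElem?_getD]
    rw [elemOf, if_neg (by omega)]
  have hvB1 : vOf (insert (elemOf A j + 1) A) (j+1) = vOf A j - 1 := by
    rw [vOf, hB1, vOf]
    push_cast
    ring
  refine ⟨hxA, by omega, hB1, ?_, ?_⟩
  · intro i hi
    rcases Nat.eq_zero_or_pos i with rfl | hi0
    · have h0 : vOf (insert (elemOf A j + 1) A) 0 = 0 := by simp [vOf, elemOf_zero]
      have hAj : vOf A j = (elemOf A j : ℤ) - 2 * j := rfl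
      rw [h0, hvB1, hAj]
      omega
    rcases le_or_gt i j with hij | hij
    · have hBi : vOf (insert (elemOf A j + 1) A) i = vOf A i := by
        rw [vOf, hB2 i (by omega) hij, vOf]
      rw [hBi, hvB1]
      have := hmin i (by omega)
      omega
    rcases eq_or_lt_of_le (Nat.succ_le_of_lt hij) with rfl | hij2
    · exact le_rfl
    · have hBi : vOf (insert (elemOf A j + 1) A) i = vOf A (i - 1) - 2 := by
        rw [vOf, hB3 i (by omega), vOf]
        omega
      have hm := hmin (i - 1) (by omega)
      have hne : vOf A (i - 1) ≠ vOf A j := by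
        intro h
        have := hlargest (i - 1) (by omega) h
        omega
      rw [hBi, hvB1]
      omega
  · intro i hi heq
    by_contra hc
    push_neg at hc
    rcases Nat.eq_zero_or_pos i with rfl | hi0
    · have h0 : vOf (insert (elemOf A j + 1) A) 0 = 0 := by simp [vOf, elemOf_zero]
      have hAj : vOf A j = (elemOf A j : ℤ) - 2 * j := rfl
      rw [h0] at heq
      rw [hvB1, hAj] at heq
      omega
    · have hij : i ≤ j := by omega
      have hBi : vOf (insert (elemOf A j + 1) A) i = vOf A i := by
        rw [vOf, hB2 i (by omega) hij, vOf]
      rw [hBi, hvB1] at heq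
      have := hmin i (by omega)
      omega

/-- Let `A = {a_1 < ... < a_r} ⊆ [2r+2]` and let `j` be the largest index
`i ∈ {0,1,...,r}` for which `a_i - 2i` is minimal (with `a_0 = 0`).  Then the map
`φ(A) = A ∪ {a_j + 1}` is well defined (`a_j + 1 ∉ A` and `a_j + 1 ≤ 2r+2`, so `φ(A)`
is an `(r+1)`-element subset of `[2r+2]`), it is injective, and `2r+2 ∉ φ(A) \ A`. -/
theorem stmt_19 (r : ℕ) (A : Finset ℕ)
    (hA : A ⊆ Finset.Icc 1 (2 * r + 2)) (hcard : A.card = r)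
    (j : ℕ) (hj : j ≤ r)
    (hmin : ∀ i ≤ r, vOf A j ≤ vOf A i)
    (hlargest : ∀ i ≤ r, vOf A i = vOf A j → i ≤ j) :
    elemOf A j + 1 ∉ A ∧
    elemOf A j + 1 ≤ 2 * r + 2 ∧
    (insert (elemOf A j + 1) A).card = r + 1 ∧
    (2 * r + 2) ∉ (insert (elemOf A j + 1) A) \ A ∧
    ∀ (A' : Finset ℕ), A' ⊆ Finset.Icc 1 (2 * r + 2) → A'.card = r →
      ∀ j' ≤ r, (∀ i ≤ r, vOf A' j' ≤ vOf A' i) →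
        (∀ i ≤ r, vOf A' i = vOf A' j' → i ≤ j') →
        insert (elemOf A j + 1) A = insert (elemOf A' j' + 1) A' → A = A' := by
  obtain ⟨hxA, haj, hB1, hBmin, hBsmall⟩ := core r A hA hcard j hj hmin hlargest
  refine ⟨hxA, by omega, ?_, ?_, ?_⟩
  · rw [Finset.card_insert_of_notMem hxA, hcard]
  · intro h
    rw [Finset.mem_sdiff] at h
    rcases Finset.mem_insert.1 h.1 with h2 | h2
    · omega
    · exact h.2 h2
  · intro A' hA' hcard' j' hj' hmin' hlargest' heq
    obtain ⟨hxA', haj', hB1', hBmin', hBsmall'⟩ := core r A' hA' hcard' j' hj' hmin' hlargest'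
    have hjj : j = j' := by
      have e1 : vOf (insert (elemOf A j + 1) A) (j + 1) ≤
          vOf (insert (elemOf A j + 1) A) (j' + 1) := hBmin (j' + 1) (by omega)
      have e2 : vOf (insert (elemOf A j + 1) A) (j' + 1) ≤
          vOf (insert (elemOf A j + 1) A) (j + 1) := by
        rw [heq]; exact hBmin' (j + 1) (by omega)
      have e3 : j + 1 ≤ j' + 1 := by
        have := hBsmall (j' + 1) (by omega)
        exact this (le_antisymm e2 e1)
      have e4 : j' + 1 ≤ j + 1 := by
        have := hBsmall' (j + 1) (by omega)
        rw [← heq] at this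
        exact this (le_antisymm e1 e2)
      omega
    have hx : elemOf A j + 1 = elemOf A' j' + 1 := by
      rw [← hB1, ← hB1', ← hjj, heq, hjj]
    calc A = (insert (elemOf A j + 1) A).erase (elemOf A j + 1) :=
            (Finset.erase_insert hxA).symm
      _ = (insert (elemOf A' j' + 1) A').erase (elemOf A' j' + 1) := by rw [heq, hx]
      _ = A' := Finset.erase_insert hxA'
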